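/- arXiv:2210.10577 — 3 statements merged into one kernel-verified Lean document; each statement's English description precedes it below -/
import Mathlib

section
/- Let k be a positive integer and let (a_n)_{n≥1} be the {1,...,k}-LID sequence. Then for all nonnegative integers n: a_{n+1} = 1 + ∑ a_{n−i(k+1)}, where the sum ranges over all nonnegative integers i with n − i(k+1) ≥ 1; moreover a_{n+1} = n + 1 if n ≤ k, and a_{n+1} = a_n + a_{n−k} if n ≥ k + 1. -/
/-!
Write `T n = strideSum k a n = a n + a (n - (k+1)) + a (n - 2(k+1)) + ⋯` for the sum in the statement.
A `{1,…,k}`-legal set of indices in `[1, n]` either avoids `n`, or contains `n` and otherwise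
only indices `≤ n - (k+1)`. Hence the numbers representable with `a 1, …, a n` are those
representable with `a 1, …, a (n-1)` together with `a n` plus those representable with
`a 1, …, a (n-(k+1))`. By strong induction these are exactly `0, 1, …, T n`: once
`a n = T (n-1) + 1`, the two intervals `[0, T (n-1)]` and `a n + [0, T (n-(k+1))]` are adjacent.
So `a (n+1) = T n + 1`, and both recurrences follow from `T n = a n + T (n-(k+1))`.
-/

/-- `L` is an `S`-legal index set: all pairwise index differences avoid `S`. -/
def SlidLegal (S : Set ℕ) (L : Finset ℕ) : Prop :=
  ∀ i ∈ L, ∀ j ∈ L, ((i : ℤ) - (j : ℤ)).natAbs ∉ S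

/-- `m` has an `S`-LID decomposition using the terms `a 1, …, a n`. -/
def SlidDecomp (S : Set ℕ) (a : ℕ → ℕ) (n m : ℕ) : Prop :=
  ∃ L : Finset ℕ, L ⊆ Finset.Icc 1 n ∧ SlidLegal S L ∧ m = ∑ ℓ ∈ L, a ℓ

/-- `a` is the `S`-LID sequence (indexed from `1`; `a 0` is unconstrained):
for each `n ≥ 1`, `a n` is the least positive integer with no `S`-LID
decomposition using `a 1, …, a (n-1)`. -/
def IsSlidSeq (S : Set ℕ) (a : ℕ → ℕ) : Prop :=
  ∀ n, 1 ≤ n → IsLeast {m | 0 < m ∧ ¬ SlidDecomp S a (n - 1) m} (a n)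

open Finset

def strideSum (k : ℕ) (a : ℕ → ℕ) (n : ℕ) : ℕ :=
  ∑ i ∈ (range (n + 1)).filter (fun i => 1 ≤ n - i * (k + 1)), a (n - i * (k + 1))

section strideSum

variable (k : ℕ) (a : ℕ → ℕ)

lemma filter_range_one_le_sub_mul (n : ℕ) :
    (range (n + 1)).filter (fun i => 1 ≤ n - i * (k + 1)) = range ((n + k) / (k + 1)) := by
  ext i
  rw [mem_filter, mem_range, mem_range, Nat.lt_div_iff_mul_lt (by omega : 0 < k + 1)]
  have : i ≤ i * (k + 1) := Nat.le_mul_of_pos_right _ k.succ_pos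
  omega

lemma strideSum_eq_sum_range (n : ℕ) :
    strideSum k a n = ∑ i ∈ range ((n + k) / (k + 1)), a (n - i * (k + 1)) := by
  rw [strideSum, filter_range_one_le_sub_mul]

@[simp]
lemma strideSum_zero : strideSum k a 0 = 0 := by
  simp [strideSum]

lemma strideSum_of_pos {n : ℕ} (hn : 0 < n) :
    strideSum k a n = a n + strideSum k a (n - (k + 1)) := by
  have hlen : (n + k) / (k + 1) = (n - (k + 1) + k) / (k + 1) + 1 := by
    rcases le_or_gt n k with hnk | hkn
    · rw [Nat.sub_eq_zero_of_le (by omega), zero_add, Nat.div_eq_of_lt k.lt_succ_self,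
        Nat.div_eq_of_lt_le (k := 1) (by omega) (by omega)]
    · rw [← Nat.add_div_right _ k.succ_pos]
      congr 1
      omega
  rw [strideSum_eq_sum_range, strideSum_eq_sum_range, hlen, sum_range_succ', add_comm]
  simp only [zero_mul, Nat.sub_zero]
  congr 1
  refine sum_congr rfl fun i _ => congrArg a ?_
  rw [Nat.sub_sub, add_mul, one_mul, add_comm]

lemma strideSum_of_pos_of_le {n : ℕ} (hn : 0 < n) (hnk : n ≤ k + 1) : strideSum k a n = a n := by
  rw [strideSum_of_pos k a hn, Nat.sub_eq_zero_of_le hnk, strideSum_zero, add_zero]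

end strideSum

section SlidDecomp

variable {S : Set ℕ} {a : ℕ → ℕ}

lemma SlidLegal.subset {L L' : Finset ℕ} (h : SlidLegal S L) (hsub : L' ⊆ L) : SlidLegal S L' :=
  fun i hi j hj => h i (hsub hi) j (hsub hj)

lemma SlidDecomp.mono {n n' m : ℕ} (h : SlidDecomp S a n m) (hn : n ≤ n') :
    SlidDecomp S a n' m := by
  obtain ⟨L, hL, hleg, rfl⟩ := h
  exact ⟨L, hL.trans (Icc_subset_Icc_right hn), hleg, rfl⟩

@[simp]
lemma slidDecomp_zero_iff {m : ℕ} : SlidDecomp S a 0 m ↔ m = 0 := by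
  constructor
  · rintro ⟨L, hL, -, rfl⟩
    simp [subset_empty.mp (by simpa using hL)]
  · rintro rfl
    exact ⟨∅, empty_subset _, fun _ h => absurd h (notMem_empty _), rfl⟩

lemma IsSlidSeq.apply_succ_eq {n T : ℕ} (ha : IsSlidSeq S a)
    (hdecomp : ∀ m, SlidDecomp S a n m ↔ m ≤ T) : a (n + 1) = T + 1 := by
  refine (ha (n + 1) (by omega)).unique ⟨⟨T.succ_pos, ?_⟩, ?_⟩
  · simp [hdecomp]
  · rintro m ⟨hm, hnot⟩
    rw [Nat.add_sub_cancel, hdecomp] at hnot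
    omega

end SlidDecomp

lemma slidDecomp_Icc_iff {k : ℕ} {a : ℕ → ℕ} {n m : ℕ} (hn : 0 < n) :
    SlidDecomp (Set.Icc 1 k) a n m ↔
      SlidDecomp (Set.Icc 1 k) a (n - 1) m ∨
        ∃ m', m = a n + m' ∧ SlidDecomp (Set.Icc 1 k) a (n - (k + 1)) m' := by
  constructor
  · rintro ⟨L, hL, hleg, rfl⟩
    by_cases hnL : n ∈ L
    · refine .inr ⟨_, (add_sum_erase L a hnL).symm, L.erase n, fun ℓ hℓ => ?_,
        hleg.subset (erase_subset n L), rfl⟩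
      have hℓL := mem_of_mem_erase hℓ
      have hℓn := ne_of_mem_erase hℓ
      have hfar := hleg ℓ hℓL n hnL
      have hrange := mem_Icc.mp (hL hℓL)
      rw [Set.mem_Icc] at hfar
      rw [mem_Icc]
      omega
    · refine .inl ⟨L, fun ℓ hℓ => ?_, hleg, rfl⟩
      have hrange := mem_Icc.mp (hL hℓ)
      have hℓn : ℓ ≠ n := fun h => hnL (h ▸ hℓ)
      rw [mem_Icc]
      omega
  · rintro (h | ⟨m', rfl, L, hL, hleg, rfl⟩)
    · exact h.mono (Nat.sub_le n 1)
    · have hfar : ∀ j ∈ L, 1 ≤ j ∧ j + (k + 1) ≤ n := fun j hj => by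
        have := mem_Icc.mp (hL hj)
        omega
      have hnL : n ∉ L := fun h => by have := hfar n h; omega
      refine ⟨insert n L, insert_subset (mem_Icc.mpr ⟨hn, le_rfl⟩)
        (hL.trans (Icc_subset_Icc_right (Nat.sub_le n (k + 1)))), ?_, (sum_insert hnL).symm⟩
      intro i hi j hj
      rcases mem_insert.mp hi with hi | hi <;> rcases mem_insert.mp hj with hj | hj
      · simp [hi, hj]
      · have := hfar j hj
        rw [Set.mem_Icc]
        omega
      · have := hfar i hi
        rw [Set.mem_Icc]
        omega
      · exact hleg i hi j hj

theorem slidDecomp_Icc_iff_le_strideSum {k : ℕ} {a : ℕ → ℕ} (ha : IsSlidSeq (Set.Icc 1 k) a)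
    (n m : ℕ) : SlidDecomp (Set.Icc 1 k) a n m ↔ m ≤ strideSum k a n := by
  induction n using Nat.strong_induction_on generalizing m with
  | _ n ih =>
  rcases Nat.eq_zero_or_pos n with rfl | hn
  · simp
  have hprev := ha.apply_succ_eq (ih (n - 1) (by omega))
  rw [Nat.sub_add_cancel hn] at hprev
  rw [slidDecomp_Icc_iff hn, ih (n - 1) (by omega), strideSum_of_pos k a hn]
  simp_rw [ih (n - (k + 1)) (by omega)]
  constructor
  · rintro (h | ⟨m', rfl, h⟩) <;> omega
  · intro h
    by_cases hm : m ≤ strideSum k a (n - 1)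
    · exact .inl hm
    · exact .inr ⟨m - a n, by omega, by omega⟩

theorem interval_slid_formulas_general
    (k : ℕ)
    (a : ℕ → ℕ) (ha : IsSlidSeq (Set.Icc 1 k) a) :
    ∀ n : ℕ,
      a (n + 1) = 1 + ∑ i ∈ (Finset.range (n + 1)).filter
          (fun i => 1 ≤ n - i * (k + 1)), a (n - i * (k + 1)) ∧
      (n ≤ k → a (n + 1) = n + 1) ∧
      (k + 1 ≤ n → a (n + 1) = a n + a (n - k)) := by
  have hsucc (n : ℕ) : a (n + 1) = strideSum k a n + 1 :=
    ha.apply_succ_eq (slidDecomp_Icc_iff_le_strideSum ha n)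
  have hinit (n : ℕ) (hnk : n ≤ k) : a (n + 1) = n + 1 := by
    induction n with
    | zero => simp [hsucc]
    | succ n ih => rw [hsucc, strideSum_of_pos_of_le k a n.succ_pos (by omega), ih (by omega)]
  intro n
  refine ⟨by rw [hsucc, strideSum, add_comm], hinit n, fun hkn => ?_⟩
  have hback := hsucc (n - (k + 1))
  rw [show n - (k + 1) + 1 = n - k by omega] at hback
  rw [hsucc, strideSum_of_pos k a (by omega), hback, add_assoc]

theorem interval_slid_formulas
    (k : ℕ) (hk : 1 ≤ k)
    (a : ℕ → ℕ) (ha : IsSlidSeq (Set.Icc 1 k) a) :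
    ∀ n : ℕ,
      a (n + 1) = 1 + ∑ i ∈ (Finset.range (n + 1)).filter
          (fun i => 1 ≤ n - i * (k + 1)), a (n - i * (k + 1)) ∧
      (n ≤ k → a (n + 1) = n + 1) ∧
      (k + 1 ≤ n → a (n + 1) = a n + a (n - k)) :=
  interval_slid_formulas_general k a ha
end

section
/- Let c' be a positive integer satisfying k ≥ 2(c' + 1). Then for all n ≥ 1, a_n > ∑ a_{n−i(k−c')}, where the sum ranges over all positive integers i with n − i(k−c') ≥ 1. -/
/-!
Let `d = k - c'`, so `2 ≤ d` and `k + 2 ≤ 2d`. Every element of `S` is at most `k`, so any legal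
decomposition using indices below `n - k` stays legal after adding the index `n`; together with
monotonicity this gives the growth law `a n ≥ a (n-1) + a (n-1-k)`. Writing `T n` for
`a (n-d) + a (n-2d) + ⋯`, we have `T n = a (n-d) + a (n-2d) + T (n-2d)`, and by strong induction
`T (n-2d) < a (n-2d)`. Two applications of the growth law bound `a (n-d) + 2 a (n-2d)` by `a n`.
-/

/-- `a (n - d) + a (n - 2d) + ⋯`, over the indices that remain positive. -/
def arithTail (a : ℕ → ℕ) (d n : ℕ) : ℕ :=
  ∑ i ∈ Finset.range ((n - 1) / d), a (n - (i + 1) * d)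

lemma arithTail_of_le {a : ℕ → ℕ} {d n : ℕ} (h : n ≤ d) : arithTail a d n = 0 := by
  rw [arithTail, Nat.div_eq_zero_iff.2 (by omega), Finset.sum_range_zero]

lemma arithTail_of_lt {a : ℕ → ℕ} {d n : ℕ} (hd : 0 < d) (h : d < n) :
    arithTail a d n = a (n - d) + arithTail a d (n - d) := by
  rw [arithTail, arithTail, Nat.div_eq_sub_div hd (by omega : d ≤ n - 1),
    Finset.sum_range_succ', add_comm, zero_add, one_mul, Nat.sub_right_comm]
  congr 1
  refine Finset.sum_congr rfl fun i _ => congrArg a ?_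
  rw [add_one_mul, Nat.sub_add_eq, Nat.sub_right_comm]

lemma sum_filter_eq_arithTail (a : ℕ → ℕ) {d : ℕ} (hd : 0 < d) (n : ℕ) :
    ∑ i ∈ (Finset.Icc 1 n).filter (fun i => 1 ≤ n - i * d), a (n - i * d) =
      arithTail a d n := by
  have hset : (Finset.Icc 1 n).filter (fun i => 1 ≤ n - i * d) =
      Finset.Ico 1 ((n - 1) / d + 1) := by
    ext i
    simp only [Finset.mem_filter, Finset.mem_Icc, Finset.mem_Ico, Nat.lt_succ_iff,
      Nat.le_div_iff_mul_le hd]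
    have : i ≤ i * d := Nat.le_mul_of_pos_right i hd
    omega
  rw [hset, Finset.sum_Ico_eq_sum_range, Nat.add_sub_cancel, arithTail]
  simp only [add_comm 1]

section

variable {S : Set ℕ} {a : ℕ → ℕ} {k n m x : ℕ}

lemma SlidLegal.insert_of_far {L : Finset ℕ} (hL : SlidLegal S L) (h0 : 0 ∉ S)
    (hS : ∀ s ∈ S, s ≤ k) (hfar : ∀ i ∈ L, i + k < n) : SlidLegal S (insert n L) := by
  have hgap : ∀ i ∈ L, ((n : ℤ) - i).natAbs ∉ S ∧ ((i : ℤ) - n).natAbs ∉ S :=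
    fun i hi => by
      have := hfar i hi
      exact ⟨fun hs => by have := hS _ hs; omega, fun hs => by have := hS _ hs; omega⟩
  intro i hi j hj
  rcases Finset.mem_insert.1 hi with rfl | hiL <;> rcases Finset.mem_insert.1 hj with rfl | hjL
  · simpa using h0
  · exact (hgap j hjL).1
  · exact (hgap i hiL).2
  · exact hL i hiL j hjL

namespace SlidDecomp

lemma mono_s12 {n' : ℕ} (h : n ≤ n') (hd : SlidDecomp S a n m) : SlidDecomp S a n' m := by
  obtain ⟨L, hL, hlegal, rfl⟩ := hd
  exact ⟨L, hL.trans (Finset.Icc_subset_Icc_right h), hlegal, rfl⟩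

lemma self (h0 : 0 ∉ S) (hn : 1 ≤ n) : SlidDecomp S a n (a n) :=
  ⟨{n}, by simpa using hn, by simpa [SlidLegal] using h0, by simp⟩

lemma add_of_far {j : ℕ} (h0 : 0 ∉ S) (hS : ∀ s ∈ S, s ≤ k) (hd : SlidDecomp S a m x)
    (hj : m + k < j) (hjn : j ≤ n) : SlidDecomp S a n (x + a j) := by
  obtain ⟨L, hL, hlegal, rfl⟩ := hd
  have hle : ∀ i ∈ L, 1 ≤ i ∧ i ≤ m := fun i hi => Finset.mem_Icc.1 (hL hi)
  have hjL : j ∉ L := fun hjL => by have := hle j hjL; omega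
  refine ⟨insert j L, Finset.insert_subset (Finset.mem_Icc.2 (by omega)) fun i hi => ?_,
    hlegal.insert_of_far h0 hS fun i hi => by have := hle i hi; omega, ?_⟩
  · have := hle i hi
    exact Finset.mem_Icc.2 (by omega)
  · rw [Finset.sum_insert hjL, add_comm]

end SlidDecomp

namespace IsSlidSeq

lemma pos (ha : IsSlidSeq S a) (hn : 1 ≤ n) : 0 < a n := (ha n hn).1.1

lemma not_slidDecomp (ha : IsSlidSeq S a) (hn : 1 ≤ n) : ¬ SlidDecomp S a (n - 1) (a n) :=
  (ha n hn).1.2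

lemma slidDecomp_of_lt (ha : IsSlidSeq S a) (hn : 1 ≤ n) (hm : 0 < m) (h : m < a n) :
    SlidDecomp S a (n - 1) m := by
  by_contra hd
  exact h.not_ge ((ha n hn).2 ⟨hm, hd⟩)

lemma slidDecomp_of_le (ha : IsSlidSeq S a) (h0 : 0 ∉ S) (hn : 1 ≤ n) (hm : 0 < m)
    (h : m ≤ a n) :
    SlidDecomp S a n m := by
  rcases h.lt_or_eq with h | rfl
  · exact (ha.slidDecomp_of_lt hn hm h).mono_s12 (Nat.sub_le n 1)
  · exact .self h0 hn

lemma lt_succ (ha : IsSlidSeq S a) (h0 : 0 ∉ S) (hn : 1 ≤ n) : a n < a (n + 1) := by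
  by_contra! h
  exact ha.not_slidDecomp (Nat.le_add_left 1 n)
    (ha.slidDecomp_of_le h0 hn (ha.pos (by omega)) h)

lemma strictMonoOn (ha : IsSlidSeq S a) (h0 : 0 ∉ S) : StrictMonoOn a (Set.Ici 1) :=
  strictMonoOn_Ici_of_pred_lt fun m hm => by
    have := ha.lt_succ h0 (n := m - 1) (by omega)
    simpa [Nat.sub_add_cancel (Nat.one_le_of_lt hm)] using this

lemma apply_le_apply (ha : IsSlidSeq S a) (h0 : 0 ∉ S) (hm : 1 ≤ m) (h : m ≤ n) :
    a m ≤ a n :=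
  ((ha.strictMonoOn h0).le_iff_le hm (hm.trans h)).2 h

lemma add_le (ha : IsSlidSeq S a) (h0 : 0 ∉ S) (hS : ∀ s ∈ S, s ≤ k) (hn : k + 2 ≤ n) :
    a (n - 1) + a (n - 1 - k) ≤ a n := by
  by_contra! h
  apply ha.not_slidDecomp (by omega : 1 ≤ n)
  rcases le_or_gt (a n) (a (n - 1)) with hle | hlt
  · exact ha.slidDecomp_of_le h0 (by omega) (ha.pos (by omega)) hle
  · have hd := ha.slidDecomp_of_lt (by omega : 1 ≤ n - 1 - k) (by omega : 0 < a n - a (n - 1))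
      (by omega)
    have := hd.add_of_far h0 hS (j := n - 1) (by omega) le_rfl
    rwa [Nat.sub_add_cancel hlt.le] at this

lemma arithTail_lt (ha : IsSlidSeq S a) (h0 : 0 ∉ S) (hS : ∀ s ∈ S, s ≤ k) {d : ℕ}
    (hd : 2 ≤ d) (hkd : k + 2 ≤ 2 * d) (n : ℕ) (hn : 1 ≤ n) : arithTail a d n < a n := by
  induction n using Nat.strong_induction_on with
  | _ n ih =>
    rcases le_or_gt n d with hnd | hnd
    · rw [arithTail_of_le hnd]
      exact ha.pos hn
    rw [arithTail_of_lt (by omega) hnd]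
    rcases le_or_gt (n - d) d with hnd' | hnd'
    · rw [arithTail_of_le hnd', add_zero]
      exact (ha.strictMonoOn h0) (Set.mem_Ici.2 (by omega)) (Set.mem_Ici.2 hn) (by omega)
    rw [arithTail_of_lt (by omega) hnd']
    have htail := ih (n - d - d) (by omega) (by omega)
    have hgrow := ha.add_le h0 hS (n := n) (by omega)
    have hgrow' := ha.add_le h0 hS (n := n - 1) (by omega)
    have h₁ := ha.apply_le_apply h0 (m := n - d) (n := n - 1 - 1) (by omega) (by omega)
    have h₂ := ha.apply_le_apply h0 (m := n - d - d) (n := n - 1 - 1 - k) (by omega) (by omega)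
    have h₃ := ha.apply_le_apply h0 (m := n - d - d) (n := n - 1 - k) (by omega) (by omega)
    calc a (n - d) + (a (n - d - d) + arithTail a d (n - d - d))
        < a (n - d) + a (n - d - d) + a (n - d - d) := by omega
      _ ≤ a (n - 1 - 1) + a (n - 1 - 1 - k) + a (n - 1 - k) := by omega
      _ ≤ a (n - 1) + a (n - 1 - k) := by omega
      _ ≤ a n := hgrow

end IsSlidSeq

end

theorem arith_series_bound_general
    (S : Finset ℕ) (hne : S.Nonempty) (hpos : ∀ s ∈ S, 0 < s)
    (k : ℕ) (hk : k = S.max' hne)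
    (a : ℕ → ℕ) (ha : IsSlidSeq ↑S a)
    (c' : ℕ) (hk2 : 2 * (c' + 1) ≤ k) :
    ∀ n, 1 ≤ n →
      (∑ i ∈ (Finset.Icc 1 n).filter (fun i => 1 ≤ n - i * (k - c')),
        a (n - i * (k - c'))) < a n := by
  intro n hn
  have h0 : 0 ∉ (S : Set ℕ) := fun h => (hpos 0 h).false
  have hS : ∀ s ∈ (S : Set ℕ), s ≤ k := fun s hs => hk ▸ S.le_max' s hs
  rw [sum_filter_eq_arithTail a (by omega)]
  exact ha.arithTail_lt h0 hS (by omega) (by omega) n hn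

theorem arith_series_bound
    (S : Finset ℕ) (hne : S.Nonempty) (hpos : ∀ s ∈ S, 0 < s)
    (k : ℕ) (hk : k = S.max' hne)
    (c : ℕ) (hc : 0 < c)
    (hleast : IsLeast {m | 0 < m ∧ m ∉ (S : Set ℕ)} (k - c))
    (a : ℕ → ℕ) (ha : IsSlidSeq ↑S a)
    (c' : ℕ) (hc' : 0 < c') (hk2 : 2 * (c' + 1) ≤ k) :
    ∀ n, 1 ≤ n →
      (∑ i ∈ (Finset.Icc 1 n).filter (fun i => 1 ≤ n - i * (k - c')),
        a (n - i * (k - c'))) < a n :=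
  arith_series_bound_general S hne hpos k hk a ha c' hk2
end

section
/- Let k and c be positive integers with 2c < k, let S = {1,...,k} \ {k − c}, and let (a_n)_{n≥1} be the S-LID sequence. For each n ≥ 0, let d_n be the number of sets L ⊆ {1, ..., n} such that |i − j| ∉ S for all i, j ∈ L (equivalently, the number of S-LID decompositions formable with {a_1, ..., a_n}, including the empty decomposition). Then d_n = d_{n−1} + d_{n−k+c} − d_{n−k+c−1} + d_{n−k−1} for all integers n > k + 1. -/
open Finset

section LegalSets

open scoped Classical

variable {S : Set ℕ}

noncomputable def legalSets (S : Set ℕ) (T : Finset ℕ) : Finset (Finset ℕ) :=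
  T.powerset.filter (SlidLegal S)

lemma mem_legalSets {T L : Finset ℕ} : L ∈ legalSets S T ↔ L ⊆ T ∧ SlidLegal S L := by
  simp [legalSets]

lemma SlidLegal.mono {L L' : Finset ℕ} (hL : SlidLegal S L) (h : L' ⊆ L) : SlidLegal S L' :=
  fun i hi j hj => hL i (h hi) j (h hj)

lemma SlidLegal.insert (h0 : 0 ∉ S) {L : Finset ℕ} (hL : SlidLegal S L) {x : ℕ}
    (hx : ∀ y ∈ L, ((x : ℤ) - y).natAbs ∉ S) : SlidLegal S (insert x L) := by
  intro i hi j hj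
  rcases mem_insert.1 hi with rfl | hiL <;> rcases mem_insert.1 hj with rfl | hjL
  · simpa using h0
  · exact hx j hjL
  · rw [← Int.natAbs_neg, neg_sub]
    exact hx i hiL
  · exact hL i hiL j hjL

lemma natCard_slidLegal_eq_card_legalSets (S : Set ℕ) (T : Finset ℕ) :
    Nat.card {L : Finset ℕ // L ⊆ T ∧ SlidLegal S L} = #(legalSets S T) := by
  rw [← Nat.card_eq_finsetCard]
  exact Nat.card_congr (Equiv.subtypeEquivRight fun _ => mem_legalSets.symm)

noncomputable def compatibleWith (S : Set ℕ) (T : Finset ℕ) (x : ℕ) : Finset ℕ :=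
  (T.erase x).filter fun y => ((x : ℤ) - y).natAbs ∉ S

lemma card_legalSets_filter_mem (h0 : 0 ∉ S) {T : Finset ℕ} {x : ℕ} (hx : x ∈ T) :
    #((legalSets S T).filter (x ∈ ·)) = #(legalSets S (compatibleWith S T x)) := by
  refine card_bij' (fun L _ => L.erase x) (fun L _ => insert x L) ?_ ?_ ?_ ?_
  · intro L hL
    simp only [mem_filter, mem_legalSets] at hL
    rw [mem_legalSets]
    refine ⟨fun y hy => ?_, hL.1.2.mono (erase_subset _ _)⟩
    obtain ⟨hyx, hyL⟩ := mem_erase.1 hy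
    exact mem_filter.2 ⟨mem_erase.2 ⟨hyx, hL.1.1 hyL⟩, hL.1.2 x hL.2 y hyL⟩
  · intro L hL
    rw [mem_legalSets] at hL
    simp only [mem_filter, mem_legalSets]
    refine ⟨⟨insert_subset hx fun y hy => mem_of_mem_erase (mem_filter.1 (hL.1 hy)).1,
      hL.2.insert h0 fun y hy => (mem_filter.1 (hL.1 hy)).2⟩, mem_insert_self _ _⟩
  · intro L hL
    exact insert_erase (mem_filter.1 hL).2
  · intro L hL
    refine erase_insert fun hxL => ?_
    simpa using (mem_filter.1 ((mem_legalSets.1 hL).1 hxL)).1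

lemma card_legalSets_eq_erase_add_compatibleWith (h0 : 0 ∉ S) {T : Finset ℕ} {x : ℕ}
    (hx : x ∈ T) :
    #(legalSets S T) = #(legalSets S (T.erase x)) + #(legalSets S (compatibleWith S T x)) := by
  have hnotMem : (legalSets S T).filter (x ∉ ·) = legalSets S (T.erase x) := by
    ext L
    simp only [mem_filter, mem_legalSets, subset_erase]
    tauto
  rw [← card_legalSets_filter_mem h0 hx, ← hnotMem, add_comm,
    card_filter_add_card_filter_not]

end LegalSets

section Recurrence

variable {k c : ℕ}

lemma natAbs_notMem_Icc_diff {x y : ℕ} :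
    ((x : ℤ) - y).natAbs ∉ Set.Icc 1 k \ {k - c} ↔
      x = y ∨ k < ((x : ℤ) - y).natAbs ∨ ((x : ℤ) - y).natAbs = k - c := by
  simp only [Set.mem_sdiff, Set.mem_Icc, Set.mem_singleton_iff]
  omega

variable (hck : 2 * c < k) (m : ℕ)
include hck

lemma compatibleWith_Icc_top :
    compatibleWith (Set.Icc 1 k \ {k - c}) (Icc 1 (m + k + 1)) (m + k + 1)
      = insert (m + c + 1) (Icc 1 m) := by
  ext y
  simp only [compatibleWith, mem_filter, mem_erase, mem_insert, mem_Icc, natAbs_notMem_Icc_diff]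
  omega

lemma compatibleWith_insert_eq_compatibleWith_Icc :
    compatibleWith (Set.Icc 1 k \ {k - c}) (insert (m + c + 1) (Icc 1 m)) (m + c + 1)
      = compatibleWith (Set.Icc 1 k \ {k - c}) (Icc 1 (m + c + 1)) (m + c + 1) := by
  ext y
  simp only [compatibleWith, mem_filter, mem_erase, mem_insert, mem_Icc, natAbs_notMem_Icc_diff]
  omega

lemma card_legalSets_Icc_add_card_legalSets_Icc :
    #(legalSets (Set.Icc 1 k \ {k - c}) (Icc 1 (m + k + 1)))
        + #(legalSets (Set.Icc 1 k \ {k - c}) (Icc 1 (m + c)))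
      = #(legalSets (Set.Icc 1 k \ {k - c}) (Icc 1 (m + k)))
        + #(legalSets (Set.Icc 1 k \ {k - c}) (Icc 1 (m + c + 1)))
        + #(legalSets (Set.Icc 1 k \ {k - c}) (Icc 1 m)) := by
  have h0 : 0 ∉ Set.Icc 1 k \ {k - c} := by simp
  have hTop := card_legalSets_eq_erase_add_compatibleWith h0
    (right_mem_Icc.2 (by omega) : m + k + 1 ∈ Icc 1 (m + k + 1))
  have hMid := card_legalSets_eq_erase_add_compatibleWith h0
    (mem_insert_self (m + c + 1) (Icc 1 m))
  have hLow := card_legalSets_eq_erase_add_compatibleWith h0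
    (right_mem_Icc.2 (by omega) : m + c + 1 ∈ Icc 1 (m + c + 1))
  rw [Icc_erase_right, Ico_add_one_right_eq_Icc, compatibleWith_Icc_top hck] at hTop
  rw [erase_insert (by simp), compatibleWith_insert_eq_compatibleWith_Icc hck] at hMid
  rw [Icc_erase_right, Ico_add_one_right_eq_Icc] at hLow
  omega

end Recurrence

theorem number_of_decompositions_recurrence_general
    (k c : ℕ) (hck : 2 * c < k)
    (d : ℕ → ℕ)
    (hd : ∀ n, d n = Nat.card {L : Finset ℕ //
      L ⊆ Finset.Icc 1 n ∧ SlidLegal (Set.Icc 1 k \ {k - c}) L}) :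
    ∀ n, k + 1 < n →
      (d n : ℤ) = d (n - 1) + d (n - k + c) - d (n - k + c - 1) + d (n - k - 1) := by
  intro n hn
  obtain ⟨m, rfl⟩ : ∃ m, n = m + k + 1 := ⟨n - k - 1, by omega⟩
  rw [show m + k + 1 - 1 = m + k by omega, show m + k + 1 - k + c - 1 = m + c by omega,
    show m + k + 1 - k + c = m + c + 1 by omega, show m + k + 1 - k - 1 = m by omega]
  simp only [hd, natCard_slidLegal_eq_card_legalSets]
  have := card_legalSets_Icc_add_card_legalSets_Icc hck m
  omega

theorem number_of_decompositions_recurrence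
    (k c : ℕ) (hc : 0 < c) (hck : 2 * c < k)
    (a : ℕ → ℕ) (ha : IsSlidSeq (Set.Icc 1 k \ {k - c}) a)
    (d : ℕ → ℕ)
    (hd : ∀ n, d n = Nat.card {L : Finset ℕ //
      L ⊆ Finset.Icc 1 n ∧ SlidLegal (Set.Icc 1 k \ {k - c}) L}) :
    ∀ n, k + 1 < n →
      (d n : ℤ) = d (n - 1) + d (n - k + c) - d (n - k + c - 1) + d (n - k - 1) :=
  number_of_decompositions_recurrence_general k c hck d hd
end
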